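/- arXiv:2506.14353 — 4 statements merged into one kernel-verified Lean document; each statement's English description precedes it below -/
import Mathlib

section
/- A graphon W is connected if and only if it is finitely connected; i.e., for every measurable set U with μ(U) ∈ (0,1) one has ∫_{U×Uᶜ} W > 0 if and only if for every pair of positive-measure measurable sets U, V ⊆ [0,1] there exists m ∈ ℕ with ⟨1_U, 𝒲^m 1_V⟩ > 0. -/
open MeasureTheory

/-- The `n`-th composition power of a kernel `W` on `[0,1]` (defined for `n ≥ 1`). -/
noncomputable def compPow (W : ℝ → ℝ → ℝ) : ℕ → ℝ → ℝ → ℝ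
  | 0 => W
  | 1 => W
  | n + 2 => fun x y => ∫ z in Set.Icc (0:ℝ) 1, compPow W (n + 1) x z * W z y

/-- `⟨1_U, 𝒲^m 1_V⟩`: for `m = 0` this is `μ(U ∩ V)`, and for `m ≥ 1` it is
`∫_{U × V} W^{∘m}`. -/
noncomputable def ipow (W : ℝ → ℝ → ℝ) (U V : Set ℝ) : ℕ → ℝ
  | 0 => (volume (U ∩ V)).toReal
  | m + 1 => ∫ x in U, ∫ y in V, compPow W (m + 1) x y

/-- A graphon is connected if `∫_{U × Uᶜ} W > 0` for every measurable `U ⊆ [0,1]`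
with `0 < μ(U) < 1` (complement taken inside `[0,1]`). -/
def GraphonConnected (W : ℝ → ℝ → ℝ) : Prop :=
  ∀ S : Set ℝ, MeasurableSet S → S ⊆ Set.Icc (0:ℝ) 1 →
    0 < volume S → volume S < 1 →
    0 < ∫ x in S, ∫ y in Set.Icc (0:ℝ) 1 \ S, W x y

/-!
Let `walkWeight W U m` be `1_U` pushed `m` steps along `W`, so that `⟨1_U, 𝒲^m 1_V⟩` is its
integral over `V` (Fubini). If `W` is connected, the set `A` reached from `U` by walks of some
length has no edges leaving it, hence has full measure, so it meets `V` in positive measure.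
Conversely, if `S` has no edges leaving it, walks started in `S` never leave `S`, so
`⟨1_S, 𝒲^m 1_{[0,1] \ S}⟩ = 0` for every `m`.
-/

open Set Function

local notation "𝕀" => Set.Icc (0:ℝ) 1

namespace Graphon

lemma integrable_of_mem_Icc {α : Type*} [MeasurableSpace α] {μ : Measure α} [IsFiniteMeasure μ]
    {f : α → ℝ} (hf : Measurable f) (hf01 : ∀ x, f x ∈ 𝕀) : Integrable f μ :=
  Integrable.of_bound hf.aestronglyMeasurable 1 <| .of_forall fun x => by
    rw [Real.norm_of_nonneg (hf01 x).1]
    exact (hf01 x).2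

lemma integrableOn_of_mem_Icc {f : ℝ → ℝ} {s : Set ℝ} (hs : s ⊆ 𝕀) (hf : Measurable f)
    (hf01 : ∀ x, f x ∈ 𝕀) : IntegrableOn f s :=
  IntegrableOn.mono_set (integrable_of_mem_Icc hf hf01) hs

lemma integrable_prod_of_mem_Icc {F : ℝ → ℝ → ℝ} (hF : Measurable (uncurry F))
    (hF01 : ∀ x y, F x y ∈ 𝕀) {s t : Set ℝ} (hs : s ⊆ 𝕀) (ht : t ⊆ 𝕀) :
    Integrable (uncurry F) ((volume.restrict s).prod (volume.restrict t)) := by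
  have h : Integrable (uncurry F) ((volume.restrict 𝕀).prod (volume.restrict 𝕀)) :=
    integrable_of_mem_Icc hF fun p => hF01 p.1 p.2
  rw [Measure.prod_restrict] at h ⊢
  exact IntegrableOn.mono_set (μ := volume.prod volume) h (prod_mono hs ht)

lemma setIntegral_Icc_mem_Icc {f : ℝ → ℝ} (hf : Measurable f) (hf01 : ∀ x, f x ∈ 𝕀) :
    ∫ x in 𝕀, f x ∈ 𝕀 := by
  refine ⟨integral_nonneg fun x => (hf01 x).1, ?_⟩
  calc ∫ x in 𝕀, f x ≤ ∫ _ in 𝕀, (1:ℝ) :=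
        integral_mono (integrableOn_of_mem_Icc subset_rfl hf hf01) (integrable_const 1)
          fun x => (hf01 x).2
    _ = 1 := by simp

section Kernel

variable {W : ℝ → ℝ → ℝ} (hW : Measurable (uncurry W)) (hW01 : ∀ x y, W x y ∈ 𝕀)
include hW

lemma measurable_integral_mul_kernel {α : Type*} [MeasurableSpace α] {F : α → ℝ → ℝ}
    (hF : Measurable (uncurry F)) :
    Measurable (uncurry fun a y => ∫ z in 𝕀, F a z * W z y) := by
  have hG : Measurable fun q : (α × ℝ) × ℝ => F q.1.1 q.2 * W q.2 q.1.2 :=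
    (hF.comp (measurable_fst.fst.prodMk measurable_snd)).mul
      (hW.comp (measurable_snd.prodMk measurable_fst.snd))
  exact hG.stronglyMeasurable.integral_prod_right'.measurable

include hW01

lemma integrableOn_mul_kernel {f : ℝ → ℝ} (hf : Measurable f) (hf01 : ∀ x, f x ∈ 𝕀)
    {t : Set ℝ} (ht : t ⊆ 𝕀) (y : ℝ) : IntegrableOn (fun z => f z * W z y) t :=
  integrableOn_of_mem_Icc ht (hf.mul hW.of_uncurry_right) fun z =>
    unitInterval.mul_mem (hf01 z) (hW01 z y)

lemma integral_mul_kernel_mem_Icc {f : ℝ → ℝ} (hf : Measurable f) (hf01 : ∀ x, f x ∈ 𝕀)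
    (y : ℝ) : ∫ z in 𝕀, f z * W z y ∈ 𝕀 :=
  setIntegral_Icc_mem_Icc (hf.mul hW.of_uncurry_right) fun z =>
    unitInterval.mul_mem (hf01 z) (hW01 z y)

omit hW01 in
lemma measurable_compPow : ∀ n, Measurable (uncurry (compPow W n))
  | 0 | 1 => hW
  | n + 2 => measurable_integral_mul_kernel hW (measurable_compPow (n + 1))

lemma compPow_mem_Icc : ∀ n x y, compPow W n x y ∈ 𝕀
  | 0, x, y | 1, x, y => hW01 x y
  | n + 2, x, y => integral_mul_kernel_mem_Icc hW hW01
      (measurable_compPow hW (n + 1)).of_uncurry_left (compPow_mem_Icc (n + 1) x) y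

end Kernel

noncomputable def walkWeight (W : ℝ → ℝ → ℝ) (U : Set ℝ) : ℕ → ℝ → ℝ
  | 0 => U.indicator 1
  | m + 1 => fun y => ∫ z in 𝕀, walkWeight W U m z * W z y

section WalkWeight

variable {W : ℝ → ℝ → ℝ} (hW : Measurable (uncurry W)) (hW01 : ∀ x y, W x y ∈ 𝕀)
  {U : Set ℝ} (hU : MeasurableSet U)
include hW hU

lemma measurable_walkWeight : ∀ m, Measurable (walkWeight W U m)
  | 0 => measurable_const.indicator hU
  | m + 1 => (measurable_integral_mul_kernel hW (F := fun _ : Unit => walkWeight W U m)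
      ((measurable_walkWeight m).comp measurable_snd)).of_uncurry_left (x := ())

include hW01

lemma walkWeight_mem_Icc : ∀ m y, walkWeight W U m y ∈ 𝕀
  | 0, y => by by_cases hy : y ∈ U <;> simp [walkWeight, hy]
  | m + 1, y => integral_mul_kernel_mem_Icc hW hW01 (measurable_walkWeight hW hU m)
      (walkWeight_mem_Icc m) y

omit hW hW01 in
lemma walkWeight_one (hUI : U ⊆ 𝕀) (y : ℝ) : walkWeight W U 1 y = ∫ z in U, W z y := by
  have h : ∀ z, U.indicator (1 : ℝ → ℝ) z * W z y = U.indicator (fun z => W z y) z := by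
    intro z
    by_cases hz : z ∈ U <;> simp [hz]
  simp only [walkWeight, h]
  rw [setIntegral_indicator hU, inter_eq_right.mpr hUI]

variable (hUI : U ⊆ 𝕀)
include hUI

lemma integral_compPow_eq_walkWeight :
    ∀ m y, ∫ x in U, compPow W (m + 1) x y = walkWeight W U (m + 1) y
  | 0, y => (walkWeight_one hU hUI y).symm
  | m + 1, y => by
    have hint : Integrable (uncurry fun x z => compPow W (m + 1) x z * W z y)
        ((volume.restrict U).prod (volume.restrict 𝕀)) :=
      integrable_prod_of_mem_Icc (F := fun x z => compPow W (m + 1) x z * W z y)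
        ((measurable_compPow hW (m + 1)).mul (hW.comp (measurable_snd.prodMk measurable_const)))
        (fun x z => unitInterval.mul_mem (compPow_mem_Icc hW hW01 (m + 1) x z) (hW01 z y))
        hUI subset_rfl
    calc ∫ x in U, compPow W (m + 2) x y
        = ∫ x in U, ∫ z in 𝕀, compPow W (m + 1) x z * W z y := rfl
      _ = ∫ z in 𝕀, ∫ x in U, compPow W (m + 1) x z * W z y := integral_integral_swap hint
      _ = walkWeight W U (m + 2) y := by
        simp only [integral_mul_const, integral_compPow_eq_walkWeight m]
        rfl

lemma ipow_eq_integral_walkWeight {V : Set ℝ} (hVI : V ⊆ 𝕀) :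
    ∀ m, ipow W U V m = ∫ y in V, walkWeight W U m y
  | 0 => by simp [ipow, walkWeight, setIntegral_indicator hU, inter_comm, Measure.real]
  | m + 1 => by
    rw [ipow, integral_integral_swap (integrable_prod_of_mem_Icc (measurable_compPow hW (m + 1))
      (compPow_mem_Icc hW hW01 (m + 1)) hUI hVI)]
    exact integral_congr_ae (.of_forall (integral_compPow_eq_walkWeight hW hW01 hU hUI m))

end WalkWeight

variable {W : ℝ → ℝ → ℝ} (hW : Measurable (uncurry W)) (hW01 : ∀ x y, W x y ∈ 𝕀)
include hW hW01

section Isolated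

variable {S : Set ℝ} (hS : MeasurableSet S) (hSI : S ⊆ 𝕀)
include hS hSI

lemma walkWeight_succ_le_walkWeight_one {m : ℕ}
    (hm : walkWeight W S m =ᵐ[volume.restrict (𝕀 \ S)] 0) (y : ℝ) :
    walkWeight W S (m + 1) y ≤ walkWeight W S 1 y := by
  have hint {t : Set ℝ} (ht : t ⊆ 𝕀) : IntegrableOn (fun z => walkWeight W S m z * W z y) t :=
    integrableOn_mul_kernel hW hW01 (measurable_walkWeight hW hS m)
      (walkWeight_mem_Icc hW hW01 hS m) ht y
  have hout : ∫ z in 𝕀 \ S, walkWeight W S m z * W z y = 0 :=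
    integral_eq_zero_of_ae (hm.mono fun z hz => by simp [hz])
  calc walkWeight W S (m + 1) y = ∫ z in S ∪ 𝕀 \ S, walkWeight W S m z * W z y := by
        rw [union_sdiff_cancel hSI]; rfl
    _ = ∫ z in S, walkWeight W S m z * W z y := by
        rw [setIntegral_union disjoint_sdiff_right (measurableSet_Icc.diff hS) (hint hSI)
          (hint sdiff_subset), hout, add_zero]
    _ ≤ ∫ z in S, W z y :=
        setIntegral_mono (hint hSI)
          (integrableOn_of_mem_Icc hSI hW.of_uncurry_right (hW01 · y))
          fun z => mul_le_of_le_one_left (hW01 z y).1 (walkWeight_mem_Icc hW hW01 hS m z).2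
    _ = walkWeight W S 1 y := (walkWeight_one hS hSI y).symm

/-- Walks started in a set with no edges leaving it stay in it. -/
lemma walkWeight_ae_eq_zero_of_integral_eq_zero
    (hiso : ∫ x in S, ∫ y in 𝕀 \ S, W x y = 0) :
    ∀ m, walkWeight W S m =ᵐ[volume.restrict (𝕀 \ S)] 0 := by
  have hcompl : MeasurableSet (𝕀 \ S) := measurableSet_Icc.diff hS
  have hone : walkWeight W S 1 =ᵐ[volume.restrict (𝕀 \ S)] 0 := by
    refine (integral_eq_zero_iff_of_nonneg (fun y => (walkWeight_mem_Icc hW hW01 hS 1 y).1)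
      (integrableOn_of_mem_Icc sdiff_subset (measurable_walkWeight hW hS 1)
        (walkWeight_mem_Icc hW hW01 hS 1))).1 ?_
    rw [setIntegral_congr_fun hcompl fun y _ => walkWeight_one hS hSI y,
      ← integral_integral_swap (integrable_prod_of_mem_Icc hW hW01 hSI sdiff_subset)]
    exact hiso
  intro m
  induction m with
  | zero =>
    filter_upwards [ae_restrict_mem hcompl] with y hy
    exact indicator_of_notMem hy.2 _
  | succ m ih =>
    filter_upwards [hone] with y hy
    exact le_antisymm (hy ▸ walkWeight_succ_le_walkWeight_one hW hW01 hS hSI ih y)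
      (walkWeight_mem_Icc hW hW01 hS (m + 1) y).1

end Isolated

section Reach

def reachSet (W : ℝ → ℝ → ℝ) (U : Set ℝ) : Set ℝ :=
  𝕀 ∩ ⋃ m, {y | 0 < walkWeight W U m y}

omit hW hW01 in
lemma reachSet_subset {U : Set ℝ} : reachSet W U ⊆ 𝕀 := inter_subset_left

omit hW hW01 in
lemma subset_reachSet {U : Set ℝ} (hUI : U ⊆ 𝕀) : U ⊆ reachSet W U :=
  fun x hx => ⟨hUI hx, mem_iUnion.2 ⟨0, by simp [walkWeight, hx]⟩⟩

variable {U : Set ℝ} (hU : MeasurableSet U)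
include hU

omit hW01 in
lemma measurableSet_reachSet : MeasurableSet (reachSet W U) :=
  measurableSet_Icc.inter <| .iUnion fun m =>
    measurableSet_lt measurable_const (measurable_walkWeight hW hU m)

lemma integral_reachSet_eq_zero {y : ℝ} (hy : y ∈ 𝕀 \ reachSet W U) :
    ∫ z in reachSet W U, W z y = 0 := by
  have hstep : ∀ m, (fun z => walkWeight W U m z * W z y) =ᵐ[volume.restrict 𝕀] 0 := by
    intro m
    refine (integral_eq_zero_iff_of_nonneg
      (fun z => (unitInterval.mul_mem (walkWeight_mem_Icc hW hW01 hU m z) (hW01 z y)).1)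
      (integrableOn_mul_kernel hW hW01 (measurable_walkWeight hW hU m)
        (walkWeight_mem_Icc hW hW01 hU m) subset_rfl y)).1 ?_
    refine le_antisymm (not_lt.1 fun hpos => hy.2 ⟨hy.1, mem_iUnion.2 ⟨m + 1, hpos⟩⟩) ?_
    exact (walkWeight_mem_Icc hW hW01 hU (m + 1) y).1
  have hall : ∀ᵐ z ∂volume.restrict (reachSet W U), ∀ m, walkWeight W U m z * W z y = 0 :=
    ae_restrict_of_ae_restrict_of_subset reachSet_subset (ae_all_iff.2 hstep)
  refine integral_eq_zero_of_ae ?_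
  filter_upwards [hall, ae_restrict_mem (measurableSet_reachSet hW hU)] with z hz hzA
  obtain ⟨m, hm⟩ := mem_iUnion.1 hzA.2
  exact (mul_eq_zero.1 (hz m)).resolve_left hm.ne'

lemma integral_reachSet_sdiff_eq_zero :
    ∫ x in reachSet W U, ∫ y in 𝕀 \ reachSet W U, W x y = 0 := by
  rw [integral_integral_swap (integrable_prod_of_mem_Icc hW hW01 reachSet_subset sdiff_subset)]
  exact setIntegral_eq_zero_of_forall_eq_zero fun y hy =>
    integral_reachSet_eq_zero hW hW01 hU hy

lemma exists_ipow_pos_of_volume_inter_reachSet_pos (hUI : U ⊆ 𝕀) {V : Set ℝ} (hVI : V ⊆ 𝕀)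
    (hVA : 0 < volume (V ∩ reachSet W U)) : ∃ m, 0 < ipow W U V m := by
  have hcover : V ∩ reachSet W U ⊆ ⋃ m, {y | 0 < walkWeight W U m y} ∩ V :=
    fun y ⟨hyV, _, hy⟩ => by
      obtain ⟨m, hm⟩ := mem_iUnion.1 hy
      exact mem_iUnion.2 ⟨m, hm, hyV⟩
  obtain ⟨m, hm⟩ : ∃ m, 0 < volume ({y | 0 < walkWeight W U m y} ∩ V) := by
    by_contra! h
    exact hVA.ne' (measure_mono_null hcover (measure_iUnion_null fun m => le_zero_iff.1 (h m)))
  refine ⟨m, ?_⟩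
  have hmem := walkWeight_mem_Icc hW hW01 hU m
  rw [ipow_eq_integral_walkWeight hW hW01 hU hUI hVI,
    setIntegral_pos_iff_support_of_nonneg_ae (.of_forall (hmem · |>.1))
      (integrableOn_of_mem_Icc hVI (measurable_walkWeight hW hU m) hmem)]
  exact hm.trans_le (measure_mono fun y ⟨hy, hyV⟩ => ⟨hy.ne', hyV⟩)

end Reach

end Graphon

lemma GraphonConnected.volume_Icc_sdiff_eq_zero {W : ℝ → ℝ → ℝ} (hconn : GraphonConnected W)
    {A : Set ℝ} (hA : MeasurableSet A) (hAI : A ⊆ 𝕀) (hpos : 0 < volume A)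
    (hiso : ∫ x in A, ∫ y in 𝕀 \ A, W x y = 0) : volume (𝕀 \ A) = 0 := by
  have hA1 : volume A = 1 :=
    le_antisymm ((measure_mono hAI).trans_eq (by simp)) <| not_lt.1 fun hlt =>
      (hconn A hA hAI hpos hlt).ne' hiso
  rw [measure_sdiff hAI hA.nullMeasurableSet (by simp [hA1]), hA1]
  simp

open Graphon in
theorem stmt_3_general (W : ℝ → ℝ → ℝ)
    (hmeas : Measurable fun p : ℝ × ℝ => W p.1 p.2)
    (h0 : ∀ x y, 0 ≤ W x y) (h1 : ∀ x y, W x y ≤ 1) :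
    GraphonConnected W ↔
      ∀ U V : Set ℝ, MeasurableSet U → MeasurableSet V →
        U ⊆ Set.Icc (0:ℝ) 1 → V ⊆ Set.Icc (0:ℝ) 1 →
        0 < volume U → 0 < volume V →
        ∃ m : ℕ, 0 < ipow W U V m := by
  have hW01 : ∀ x y, W x y ∈ 𝕀 := fun x y => ⟨h0 x y, h1 x y⟩
  constructor
  · intro hconn U V hU _ hUI hVI hUpos hVpos
    have hnull : volume (𝕀 \ reachSet W U) = 0 :=
      hconn.volume_Icc_sdiff_eq_zero (measurableSet_reachSet hmeas hU) reachSet_subset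
        (hUpos.trans_le (measure_mono (subset_reachSet hUI)))
        (integral_reachSet_sdiff_eq_zero hmeas hW01 hU)
    refine exists_ipow_pos_of_volume_inter_reachSet_pos hmeas hW01 hU hUI hVI ?_
    rwa [measure_inter_conull' (measure_mono_null (sdiff_le_sdiff_right hVI) hnull)]
  · intro hfin S hS hSI hSpos hSlt
    by_contra! hle
    have hiso : ∫ x in S, ∫ y in 𝕀 \ S, W x y = 0 :=
      le_antisymm hle (integral_nonneg fun x => integral_nonneg fun y => h0 x y)
    have hcompl : 0 < volume (𝕀 \ S) := by
      rw [measure_sdiff hSI hS.nullMeasurableSet hSlt.ne_top]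
      simpa using hSlt
    obtain ⟨m, hm⟩ :=
      hfin S (𝕀 \ S) hS (measurableSet_Icc.diff hS) hSI sdiff_subset hSpos hcompl
    rw [ipow_eq_integral_walkWeight hmeas hW01 hS hSI sdiff_subset, integral_eq_zero_of_ae
      (walkWeight_ae_eq_zero_of_integral_eq_zero hmeas hW01 hS hSI hiso m)] at hm
    exact hm.false

/-- A graphon is connected iff it is finitely connected: for every pair
of positive-measure measurable sets `U, V ⊆ [0,1]` there is `m ∈ ℕ` with
`⟨1_U, 𝒲^m 1_V⟩ > 0`. -/
theorem stmt_3 (W : ℝ → ℝ → ℝ)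
    (hmeas : Measurable fun p : ℝ × ℝ => W p.1 p.2)
    (hsym : ∀ x y, W x y = W y x)
    (h0 : ∀ x y, 0 ≤ W x y) (h1 : ∀ x y, W x y ≤ 1) :
    GraphonConnected W ↔
      ∀ U V : Set ℝ, MeasurableSet U → MeasurableSet V →
        U ⊆ Set.Icc (0:ℝ) 1 → V ⊆ Set.Icc (0:ℝ) 1 →
        0 < volume U → 0 < volume V →
        ∃ m : ℕ, 0 < ipow W U V m :=
  stmt_3_general W hmeas h0 h1
end

section
/- Let W be a connected graphon and ℒ its combinatorial Laplacian operator, (ℒf)(x) = k(x)f(x) − ∫₀¹ W(x,y) f(y) dy, where k(x) = ∫₀¹ W(x,y) dy. Then the kernel of ℒ is one-dimensional, spanned by the constant function 1. -/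
open MeasureTheory

/-!
For `f` in the kernel, `0 = 2 ⟨f, ℒ f⟩ = ∫∫ W(x,y) (f x - f y)²` (expand the square and use the
symmetry of `W`), so `W` vanishes a.e. on pairs where `f x ≠ f y`. For a Borel set `U`, the
set `{f ∈ U}` therefore carries no `W`-mass across its cut, and connectedness forces it to be
null or conull. Since Borel sets separate the points of `ℝ` countably, `f` is a.e. constant.
-/

open Set

section DirichletEnergy

variable {α : Type*} [MeasurableSpace α] {μ : Measure α} [IsFiniteMeasure μ]
  {W : α → α → ℝ} {C : ℝ} {g : α → ℝ}

omit [IsFiniteMeasure μ] in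
theorem integrable_kernel_mul (hW : Measurable fun p : α × α => W p.1 p.2)
    (hbdd : ∀ x y, |W x y| ≤ C) {φ : α × α → ℝ} (hφ : Integrable φ (μ.prod μ)) :
    Integrable (fun p => W p.1 p.2 * φ p) (μ.prod μ) :=
  hφ.bdd_mul hW.aestronglyMeasurable (ae_of_all _ fun p => hbdd p.1 p.2)

theorem integral_kernel_mul_sub_sq (hW : Measurable fun p : α × α => W p.1 p.2)
    (hsym : ∀ x y, W x y = W y x) (hbdd : ∀ x y, |W x y| ≤ C) (hg : MemLp g 2 μ) :
    ∫ p, W p.1 p.2 * (g p.1 - g p.2) ^ 2 ∂μ.prod μ =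
      2 * ∫ x, g x * ((∫ y, W x y ∂μ) * g x - ∫ y, W x y * g y ∂μ) ∂μ := by
  have hsq₁ : Integrable (fun p : α × α => W p.1 p.2 * g p.1 ^ 2) (μ.prod μ) :=
    integrable_kernel_mul hW hbdd (hg.comp_fst μ).integrable_sq
  have hsq₂ : Integrable (fun p : α × α => W p.1 p.2 * g p.2 ^ 2) (μ.prod μ) :=
    integrable_kernel_mul hW hbdd (hg.comp_snd μ).integrable_sq
  have hcross : Integrable (fun p : α × α => W p.1 p.2 * (g p.1 * g p.2)) (μ.prod μ) :=
    integrable_kernel_mul hW hbdd ((hg.integrable one_le_two).mul_prod (hg.integrable one_le_two))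
  have hswap : ∫ p, W p.1 p.2 * g p.2 ^ 2 ∂μ.prod μ = ∫ p, W p.1 p.2 * g p.1 ^ 2 ∂μ.prod μ := by
    rw [← integral_prod_swap]
    simp only [Prod.fst_swap, Prod.snd_swap, hsym]
  calc ∫ p, W p.1 p.2 * (g p.1 - g p.2) ^ 2 ∂μ.prod μ
      = ∫ p, W p.1 p.2 * g p.1 ^ 2 ∂μ.prod μ + ∫ p, W p.1 p.2 * g p.2 ^ 2 ∂μ.prod μ
          - 2 * ∫ p, W p.1 p.2 * (g p.1 * g p.2) ∂μ.prod μ := by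
        rw [← integral_add hsq₁ hsq₂, ← integral_const_mul,
          ← integral_sub ?_ (hcross.const_mul 2)]
        · congr 1 with p
          ring
        · exact hsq₁.add hsq₂
    _ = 2 * ∫ x, (∫ y, W x y * g x ^ 2 ∂μ) - ∫ y, W x y * (g x * g y) ∂μ ∂μ := by
        rw [hswap, integral_sub hsq₁.integral_prod_left hcross.integral_prod_left,
          ← integral_prod _ hsq₁, ← integral_prod _ hcross]
        ring
    _ = 2 * ∫ x, g x * ((∫ y, W x y ∂μ) * g x - ∫ y, W x y * g y ∂μ) ∂μ := by
        congr 2 with x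
        rw [integral_mul_const, mul_sub, ← integral_const_mul]
        congr 1
        · ring
        · congr 1 with y
          ring

theorem ae_kernel_eq_zero_or_eq_of_laplacian_eq_zero
    (hW : Measurable fun p : α × α => W p.1 p.2) (hsym : ∀ x y, W x y = W y x)
    (h0 : ∀ x y, 0 ≤ W x y) (hbdd : ∀ x y, |W x y| ≤ C) (hg : MemLp g 2 μ)
    (hker : ∀ᵐ x ∂μ, (∫ y, W x y ∂μ) * g x - ∫ y, W x y * g y ∂μ = 0) :
    ∀ᵐ p ∂μ.prod μ, W p.1 p.2 = 0 ∨ g p.1 = g p.2 := by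
  have henergy : ∫ p, W p.1 p.2 * (g p.1 - g p.2) ^ 2 ∂μ.prod μ = 0 := by
    rw [integral_kernel_mul_sub_sq hW hsym hbdd hg, integral_eq_zero_of_ae]
    · ring
    · filter_upwards [hker] with x hx
      rw [hx, mul_zero, Pi.zero_apply]
  have hint := integrable_kernel_mul hW hbdd ((hg.comp_fst μ).sub (hg.comp_snd μ)).integrable_sq
  filter_upwards [(integral_eq_zero_iff_of_nonneg
    (fun p => mul_nonneg (h0 p.1 p.2) (sq_nonneg _)) hint).1 henergy] with p hp
  simpa [sub_eq_zero] using hp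

end DirichletEnergy

namespace GraphonConnected

variable {W : ℝ → ℝ → ℝ}

theorem volume_eq_zero_or_one (hconn : GraphonConnected W) {S : Set ℝ} (hS : MeasurableSet S)
    (hSI : S ⊆ Icc 0 1)
    (hcut : ∀ᵐ p ∂(volume.restrict (Icc (0:ℝ) 1)).prod (volume.restrict (Icc (0:ℝ) 1)),
      p.1 ∈ S → p.2 ∉ S → W p.1 p.2 = 0) :
    volume S = 0 ∨ volume S = 1 := by
  by_contra! hS01
  have hlt : volume S < 1 :=
    ((measure_mono hSI).trans_eq (by simp)).lt_of_ne hS01.2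
  refine (hconn S hS hSI (pos_iff_ne_zero.2 hS01.1) hlt).ne' ?_
  have hT : MeasurableSet (Icc 0 1 \ S) := measurableSet_Icc.diff hS
  have hprod : (volume.restrict S).prod (volume.restrict (Icc 0 1 \ S)) =
      ((volume.restrict (Icc (0:ℝ) 1)).prod (volume.restrict (Icc (0:ℝ) 1))).restrict
        (S ×ˢ (Icc 0 1 \ S)) := by
    rw [Measure.prod_restrict, Measure.prod_restrict, Measure.restrict_restrict (hS.prod hT),
      inter_eq_left.2 (prod_mono hSI sdiff_subset)]
  have hzero : ∀ᵐ p ∂(volume.restrict S).prod (volume.restrict (Icc 0 1 \ S)),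
      W p.1 p.2 = 0 := by
    rw [hprod]
    filter_upwards [ae_restrict_of_ae hcut, ae_restrict_mem (hS.prod hT)] with p hp hpST
    exact hp hpST.1 hpST.2.2
  refine integral_eq_zero_of_ae ?_
  filter_upwards [Measure.ae_ae_of_ae_prod hzero] with x hx
  exact integral_eq_zero_of_ae hx

theorem ae_mem_or_ae_notMem (hconn : GraphonConnected W) {g : ℝ → ℝ} (hg : Measurable g)
    (hcut : ∀ᵐ p ∂(volume.restrict (Icc (0:ℝ) 1)).prod (volume.restrict (Icc (0:ℝ) 1)),
      W p.1 p.2 = 0 ∨ g p.1 = g p.2)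
    {U : Set ℝ} (hU : MeasurableSet U) :
    (∀ᵐ x ∂volume.restrict (Icc (0:ℝ) 1), g x ∈ U) ∨
      ∀ᵐ x ∂volume.restrict (Icc (0:ℝ) 1), g x ∉ U := by
  have hS : MeasurableSet (Icc 0 1 ∩ g ⁻¹' U) := measurableSet_Icc.inter (hg hU)
  have hcutS : ∀ᵐ p ∂(volume.restrict (Icc (0:ℝ) 1)).prod (volume.restrict (Icc (0:ℝ) 1)),
      p.1 ∈ Icc 0 1 ∩ g ⁻¹' U → p.2 ∉ Icc 0 1 ∩ g ⁻¹' U → W p.1 p.2 = 0 := by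
    filter_upwards [hcut, Measure.quasiMeasurePreserving_snd.ae
      (ae_restrict_mem measurableSet_Icc)] with p hp hp₂ hp₁S hp₂S
    refine hp.resolve_right fun hgp => hp₂S ⟨hp₂, ?_⟩
    rw [mem_preimage, ← hgp]
    exact hp₁S.2
  rw [ae_restrict_iff' measurableSet_Icc, ae_restrict_iff' measurableSet_Icc]
  rcases hconn.volume_eq_zero_or_one hS inter_subset_left hcutS with h | h
  · right
    filter_upwards [measure_eq_zero_iff_ae_notMem.1 h] with x hx hxI hxU
    exact hx ⟨hxI, hxU⟩
  · left
    have hdiff : volume (Icc 0 1 \ (Icc 0 1 ∩ g ⁻¹' U)) = 0 := by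
      rw [measure_sdiff inter_subset_left hS.nullMeasurableSet (by simp [h]), h]
      simp
    filter_upwards [measure_eq_zero_iff_ae_notMem.1 hdiff] with x hx hxI
    by_contra hxU
    exact hx ⟨hxI, fun hxS => hxU hxS.2⟩

theorem exists_ae_eq_const (hconn : GraphonConnected W) {g : ℝ → ℝ}
    (hg : AEMeasurable g (volume.restrict (Icc (0:ℝ) 1)))
    (hcut : ∀ᵐ p ∂(volume.restrict (Icc (0:ℝ) 1)).prod (volume.restrict (Icc (0:ℝ) 1)),
      W p.1 p.2 = 0 ∨ g p.1 = g p.2) :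
    ∃ c : ℝ, ∀ᵐ x ∂volume.restrict (Icc (0:ℝ) 1), g x = c := by
  have hcut' : ∀ᵐ p ∂(volume.restrict (Icc (0:ℝ) 1)).prod (volume.restrict (Icc (0:ℝ) 1)),
      W p.1 p.2 = 0 ∨ hg.mk g p.1 = hg.mk g p.2 := by
    filter_upwards [hcut, Measure.quasiMeasurePreserving_fst.ae hg.ae_eq_mk,
      Measure.quasiMeasurePreserving_snd.ae hg.ae_eq_mk] with p hp h₁ h₂
    rwa [← h₁, ← h₂]
  obtain ⟨c, hc⟩ := Filter.exists_eventuallyEq_const_of_forall_separating MeasurableSet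
    fun U hU => hconn.ae_mem_or_ae_notMem hg.measurable_mk hcut' hU
  exact ⟨c, hg.ae_eq_mk.trans hc⟩

end GraphonConnected

/-- For a connected graphon `W`, the kernel of the combinatorial Laplacian
`(ℒf)(x) = k(x) f(x) − ∫ W(x,y) f(y) dy` (with `k(x) = ∫ W(x,y) dy`) is one-dimensional:
any `f ∈ L²[0,1]` with `ℒf = 0` a.e. is a.e. equal to a constant. -/
theorem stmt_4 (W : ℝ → ℝ → ℝ)
    (hmeas : Measurable fun p : ℝ × ℝ => W p.1 p.2)
    (hsym : ∀ x y, W x y = W y x)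
    (h0 : ∀ x y, 0 ≤ W x y) (h1 : ∀ x y, W x y ≤ 1)
    (hconn : GraphonConnected W)
    (f : ℝ → ℝ)
    (hf : MemLp f 2 (volume.restrict (Set.Icc (0:ℝ) 1)))
    (hker : ∀ᵐ x ∂(volume.restrict (Set.Icc (0:ℝ) 1)),
      (∫ y in Set.Icc (0:ℝ) 1, W x y) * f x - ∫ y in Set.Icc (0:ℝ) 1, W x y * f y = 0) :
    ∃ c : ℝ, ∀ᵐ x ∂(volume.restrict (Set.Icc (0:ℝ) 1)), f x = c :=
  hconn.exists_ae_eq_const hf.aestronglyMeasurable.aemeasurable <|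
    ae_kernel_eq_zero_or_eq_of_laplacian_eq_zero hmeas hsym h0
      (fun x y => (abs_of_nonneg (h0 x y)).trans_le (h1 x y)) hf hker
end

section
/- Let W be a connected graphon and P = {P₁,…,Pₙ} a measurable partition of [0,1] into sets of positive measure. Then the coarsened graphon W_P = step_P(mat_P(W)) is connected. -/
/-!
The flow `∫_S ∫_{Sᶜ} W` is at most the sum of the flows over the pieces `(S ∩ Pᵢ) × (Sᶜ ∩ Pⱼ)`,
so some piece carries positive flow. That piece has sides of positive measure and sits inside
`Pᵢ × Pⱼ`, so the average `wᵢⱼ` is positive, and the integral of `W_P` over `S × Sᶜ` is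
`∑ wᵢⱼ μ(S ∩ Pᵢ) μ(Sᶜ ∩ Pⱼ)`.
-/

open MeasureTheory

section Kernel

variable {α : Type*} [MeasurableSpace α] {μ : Measure α} {W : α → α → ℝ} {C : ℝ}
  {A A' B B' : Set α}

lemma integrableOn_apply_of_norm_le (hW : Measurable (Function.uncurry W))
    (hWC : ∀ x y, ‖W x y‖ ≤ C) (x : α) (hB : μ B ≠ ⊤) : IntegrableOn (W x) B μ :=
  Measure.integrableOn_of_bounded hB (hW.comp measurable_prodMk_left).aestronglyMeasurable
    (ae_of_all _ (hWC x))

lemma integrableOn_setIntegral_of_norm_le [SFinite μ] (hW : Measurable (Function.uncurry W))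
    (hWC : ∀ x y, ‖W x y‖ ≤ C) (hA : μ A ≠ ⊤) (hB : μ B ≠ ⊤) :
    IntegrableOn (fun x => ∫ y in B, W x y ∂μ) A μ :=
  Measure.integrableOn_of_bounded hA
    hW.stronglyMeasurable.integral_prod_right.aestronglyMeasurable
    (ae_of_all _ fun x => norm_setIntegral_le_of_norm_le_const hB.lt_top fun y _ => hWC x y)

lemma setIntegral_setIntegral_nonneg (hW0 : ∀ x y, 0 ≤ W x y) :
    0 ≤ ∫ x in A, ∫ y in B, W x y ∂μ ∂μ :=
  integral_nonneg fun x => integral_nonneg (hW0 x)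

lemma setIntegral_setIntegral_mono_set [SFinite μ] (hW : Measurable (Function.uncurry W))
    (hW0 : ∀ x y, 0 ≤ W x y) (hWC : ∀ x y, ‖W x y‖ ≤ C) (hA' : μ A' ≠ ⊤) (hB' : μ B' ≠ ⊤)
    (hA : A ⊆ A') (hB : B ⊆ B') :
    ∫ x in A, ∫ y in B, W x y ∂μ ∂μ ≤ ∫ x in A', ∫ y in B', W x y ∂μ ∂μ := by
  have hAfin : μ A ≠ ⊤ := measure_ne_top_of_subset hA hA'
  calc ∫ x in A, ∫ y in B, W x y ∂μ ∂μ ≤ ∫ x in A, ∫ y in B', W x y ∂μ ∂μ :=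
        integral_mono
          (integrableOn_setIntegral_of_norm_le hW hWC hAfin (measure_ne_top_of_subset hB hB'))
          (integrableOn_setIntegral_of_norm_le hW hWC hAfin hB') fun x =>
          setIntegral_mono_set (integrableOn_apply_of_norm_le hW hWC x hB')
            (ae_of_all _ (hW0 x)) hB.eventuallyLE
    _ ≤ ∫ x in A', ∫ y in B', W x y ∂μ ∂μ :=
        setIntegral_mono_set (integrableOn_setIntegral_of_norm_le hW hWC hA' hB')
          (ae_of_all _ fun x => integral_nonneg (hW0 x)) hA.eventuallyLE

lemma setIntegral_le_sum_setIntegral_inter {ι : Type*} [Fintype ι] {f : α → ℝ} {S : Set α}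
    {P : ι → Set α} (hf : ∀ x, 0 ≤ f x) (hfi : ∀ i, IntegrableOn f (S ∩ P i) μ)
    (hS : S ⊆ ⋃ i, P i) :
    ∫ x in S, f x ∂μ ≤ ∑ i, ∫ x in S ∩ P i, f x ∂μ := by
  have hrestrict : μ.restrict S ≤ ∑ i, μ.restrict (S ∩ P i) := by
    rw [← Measure.sum_fintype]
    conv_lhs => rw [← Set.inter_eq_left.2 hS, Set.inter_iUnion]
    exact Measure.restrict_iUnion_le
  calc ∫ x in S, f x ∂μ ≤ ∫ x, f x ∂(∑ i, μ.restrict (S ∩ P i)) :=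
        integral_mono_measure hrestrict (ae_of_all _ hf)
          (integrable_finsetSum_measure.2 fun i _ => hfi i)
    _ = ∑ i, ∫ x in S ∩ P i, f x ∂μ := integral_finsetSum_measure fun i _ => hfi i

lemma exists_setIntegral_setIntegral_inter_pos [SFinite μ] {ι : Type*} [Fintype ι]
    {P : ι → Set α} {S T : Set α} (hW : Measurable (Function.uncurry W))
    (hW0 : ∀ x y, 0 ≤ W x y) (hWC : ∀ x y, ‖W x y‖ ≤ C) (hSfin : μ S ≠ ⊤) (hTfin : μ T ≠ ⊤)
    (hS : S ⊆ ⋃ i, P i) (hT : T ⊆ ⋃ i, P i) (hpos : 0 < ∫ x in S, ∫ y in T, W x y ∂μ ∂μ) :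
    ∃ i j, 0 < ∫ x in S ∩ P i, ∫ y in T ∩ P j, W x y ∂μ ∂μ := by
  have hSi i : μ (S ∩ P i) ≠ ⊤ := measure_ne_top_of_subset Set.inter_subset_left hSfin
  have hTj j : μ (T ∩ P j) ≠ ⊤ := measure_ne_top_of_subset Set.inter_subset_left hTfin
  have hsplit : ∫ x in S, ∫ y in T, W x y ∂μ ∂μ
      ≤ ∑ i, ∑ j, ∫ x in S ∩ P i, ∫ y in T ∩ P j, W x y ∂μ ∂μ := by
    refine (setIntegral_le_sum_setIntegral_inter (fun x => integral_nonneg (hW0 x))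
      (fun i => integrableOn_setIntegral_of_norm_le hW hWC (hSi i) hTfin) hS).trans
      (Finset.sum_le_sum fun i _ => ?_)
    rw [← integral_finsetSum _ fun j _ =>
      integrableOn_setIntegral_of_norm_le hW hWC (hSi i) (hTj j)]
    exact integral_mono (integrableOn_setIntegral_of_norm_le hW hWC (hSi i) hTfin)
      (integrable_finsetSum _ fun j _ => integrableOn_setIntegral_of_norm_le hW hWC (hSi i) (hTj j))
      fun x => setIntegral_le_sum_setIntegral_inter (hW0 x)
        (fun j => integrableOn_apply_of_norm_le hW hWC x (hTj j)) hT
  by_contra! h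
  exact (hpos.trans_le hsplit).not_ge
    (Finset.sum_nonpos fun i _ => Finset.sum_nonpos fun j _ => h i j)

lemma measure_pos_of_setIntegral_setIntegral_pos
    (h : 0 < ∫ x in A, ∫ y in B, W x y ∂μ ∂μ) : 0 < μ A ∧ 0 < μ B := by
  refine ⟨pos_iff_ne_zero.2 fun hA => ?_, pos_iff_ne_zero.2 fun hB => ?_⟩
  · simp [Measure.restrict_eq_zero.2 hA] at h
  · simp [Measure.restrict_eq_zero.2 hB] at h

lemma setIntegral_indicator_one {s : Set α} (hs : MeasurableSet s) :
    ∫ x in A, s.indicator (fun _ => (1:ℝ)) x ∂μ = μ.real (A ∩ s) := by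
  rw [setIntegral_indicator hs, setIntegral_const, smul_eq_mul, mul_one]

lemma setIntegral_setIntegral_sum_indicator {ι : Type*} [Fintype ι] {P : ι → Set α}
    (hP : ∀ i, MeasurableSet (P i)) (hA : μ A ≠ ⊤) (hB : μ B ≠ ⊤) (c : ι → ι → ℝ) :
    ∫ x in A, ∫ y in B, (∑ i, ∑ j, c i j * (P i).indicator (fun _ => (1:ℝ)) x
        * (P j).indicator (fun _ => (1:ℝ)) y) ∂μ ∂μ
      = ∑ i, ∑ j, c i j * μ.real (A ∩ P i) * μ.real (B ∩ P j) := by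
  have hind {D : Set α} (hD : μ D ≠ ⊤) (k : ι) (K : ℝ) :
      IntegrableOn (fun y => K * (P k).indicator (fun _ => (1:ℝ)) y) D μ :=
    Integrable.const_mul ((integrableOn_const (C := (1:ℝ)) hD).indicator (hP k)) K
  simp_rw [integral_finsetSum _ fun i _ => integrable_finsetSum _ fun j _ => hind hB j _,
    integral_finsetSum _ fun j _ => hind hB j _, integral_const_mul,
    setIntegral_indicator_one (hP _), mul_right_comm (c _ _)]
  simp_rw [integral_finsetSum _ fun i _ => integrable_finsetSum _ fun j _ => hind hA i _,
    integral_finsetSum _ fun j _ => hind hA _ _, integral_const_mul,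
    setIntegral_indicator_one (hP _)]
  exact Finset.sum_congr rfl fun i _ => Finset.sum_congr rfl fun j _ => mul_right_comm _ _ _

end Kernel

theorem stmt_7_general (W : ℝ → ℝ → ℝ)
    (hmeas : Measurable fun p : ℝ × ℝ => W p.1 p.2)
    (h0 : ∀ x y, 0 ≤ W x y) (h1 : ∀ x y, W x y ≤ 1)
    (hconn : GraphonConnected W)
    {n : ℕ} (P : Fin n → Set ℝ)
    (hPmeas : ∀ i, MeasurableSet (P i))
    (hPcover : (⋃ i, P i) = Set.Icc (0:ℝ) 1) :
    GraphonConnected (fun x y => ∑ i : Fin n, ∑ j : Fin n,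
      ((∫ s in P i, ∫ t in P j, W s t) /
          ((volume (P i)).toReal * (volume (P j)).toReal))
        * (P i).indicator (fun _ => (1:ℝ)) x * (P j).indicator (fun _ => (1:ℝ)) y) := by
  intro S hS hSsub hS0 hS1
  set T := Set.Icc (0:ℝ) 1 \ S
  have hTsub : T ⊆ Set.Icc 0 1 := Set.sdiff_subset
  have hPsub i : P i ⊆ Set.Icc 0 1 := hPcover ▸ Set.subset_iUnion P i
  have hfin {A : Set ℝ} (hA : A ⊆ Set.Icc 0 1) : volume A ≠ ⊤ :=
    measure_ne_top_of_subset hA (by simp [Real.volume_Icc])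
  have hreal {A : Set ℝ} (hA : A ⊆ Set.Icc 0 1) (h : 0 < volume A) : 0 < volume.real A :=
    ENNReal.toReal_pos h.ne' (hfin hA)
  have hWC x y : ‖W x y‖ ≤ 1 := (Real.norm_of_nonneg (h0 x y)).trans_le (h1 x y)
  obtain ⟨i, j, hij⟩ := exists_setIntegral_setIntegral_inter_pos hmeas h0 hWC (hfin hSsub)
    (hfin hTsub) (hPcover ▸ hSsub) (hPcover ▸ hTsub) (hconn S hS hSsub hS0 hS1)
  have hPij : 0 < ∫ s in P i, ∫ t in P j, W s t :=
    hij.trans_le (setIntegral_setIntegral_mono_set hmeas h0 hWC (hfin (hPsub i))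
      (hfin (hPsub j)) Set.inter_subset_right Set.inter_subset_right)
  obtain ⟨hSi, hTj⟩ := measure_pos_of_setIntegral_setIntegral_pos hij
  obtain ⟨hPi, hPj⟩ := measure_pos_of_setIntegral_setIntegral_pos hPij
  have hc i j : 0 ≤ ∫ s in P i, ∫ t in P j, W s t := setIntegral_setIntegral_nonneg h0
  show 0 < ∫ x in S, ∫ y in T, _
  rw [setIntegral_setIntegral_sum_indicator hPmeas (hfin hSsub) (hfin hTsub)]
  refine Finset.sum_pos' (fun i _ => Finset.sum_nonneg fun j _ => ?_)
    ⟨i, Finset.mem_univ _, Finset.sum_pos' (fun j _ => ?_) ⟨j, Finset.mem_univ _, ?_⟩⟩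
  · have := hc i j; positivity
  · have := hc i j; positivity
  · exact mul_pos (mul_pos (div_pos hPij (mul_pos (hreal (hPsub i) hPi) (hreal (hPsub j) hPj)))
      (hreal (Set.inter_subset_left.trans hSsub) hSi))
      (hreal (Set.inter_subset_left.trans hTsub) hTj)

/-- If `W` is a connected graphon and `P = {P₁, …, Pₙ}` is a measurable
partition of `[0,1]` into sets of positive measure, then the coarsened step graphon
`W_P = step_P(mat_P(W))`, whose value on `P_i × P_j` is the average of `W` there,
is connected. -/
theorem stmt_7 (W : ℝ → ℝ → ℝ)
    (hmeas : Measurable fun p : ℝ × ℝ => W p.1 p.2)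
    (hsym : ∀ x y, W x y = W y x)
    (h0 : ∀ x y, 0 ≤ W x y) (h1 : ∀ x y, W x y ≤ 1)
    (hconn : GraphonConnected W)
    {n : ℕ} (hn : 0 < n) (P : Fin n → Set ℝ)
    (hPmeas : ∀ i, MeasurableSet (P i))
    (hPpos : ∀ i, 0 < volume (P i))
    (hPdisj : Pairwise fun i j => Disjoint (P i) (P j))
    (hPcover : (⋃ i, P i) = Set.Icc (0:ℝ) 1) :
    GraphonConnected (fun x y => ∑ i : Fin n, ∑ j : Fin n,
      ((∫ s in P i, ∫ t in P j, W s t) /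
          ((volume (P i)).toReal * (volume (P j)).toReal))
        * (P i).indicator (fun _ => (1:ℝ)) x * (P j).indicator (fun _ => (1:ℝ)) y) :=
  stmt_7_general W hmeas h0 h1 hconn P hPmeas hPcover
end

section
/- Let A be the adjacency matrix of a connected graph on n vertices, M ∈ ℝ₊^{n×n} with M_{ij} = 0 iff A_{ij} = 0, D a diagonal matrix, L = M + D, and f(t) = Σ_{k≥0} α_k t^k real analytic near 0 with all α_k ≠ 0. Then for all vertices i, j, lim_{t→0⁺} log|f(Lt)_{ij}| / log t = d(i,j), where f(Lt) = Σ_{k≥0} α_k t^k L^k and d is the shortest-path distance. -/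
section comb
variable {n : ℕ} (A M D : Matrix (Fin n) (Fin n) ℝ)

lemma auxA_nonneg (hA01 : ∀ i j, A i j = 0 ∨ A i j = 1) :
    ∀ m i j, 0 ≤ (A ^ m) i j := by
  intro m
  induction m with
  | zero => intro i j; rw [pow_zero, Matrix.one_apply]; split <;> norm_num
  | succ k ih =>
      intro i j
      rw [pow_succ, Matrix.mul_apply]
      apply Finset.sum_nonneg
      intro m _
      have h1 := ih i m
      rcases hA01 m j with h | h <;> simp [h]
      positivity

lemma auxA_step (hA01 : ∀ i j, A i j = 0 ∨ A i j = 1) (m : ℕ) (i k j : Fin n) :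
    (A ^ m) i k * A k j ≤ (A ^ (m + 1)) i j := by
  rw [pow_succ, Matrix.mul_apply]
  apply Finset.single_le_sum (f := fun m' => (A ^ m) i m' * A m' j)
  · intro x _
    have h1 := auxA_nonneg A hA01 m i x
    rcases hA01 x j with h | h <;> simp [h]
    positivity
  · exact Finset.mem_univ k

lemma auxL_zero (hA01 : ∀ i j, A i j = 0 ∨ A i j = 1)
    (hpat : ∀ i j, (M i j = 0 ↔ A i j = 0))
    (hD : ∀ i j, i ≠ j → D i j = 0) :
    ∀ k (i j : Fin n), (∀ m ≤ k, (A ^ m) i j = 0) → ((M + D) ^ k) i j = 0 := by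
  intro k
  induction k with
  | zero =>
      intro i j h
      have h0 := h 0 le_rfl
      simp only [pow_zero, Matrix.one_apply] at h0 ⊢
      split
      · rename_i hij; rw [if_pos hij] at h0; norm_num at h0
      · rfl
  | succ k ih =>
      intro i j h
      rw [pow_succ, Matrix.mul_apply]
      apply Finset.sum_eq_zero
      intro m _
      by_cases hmj : m = j
      · subst hmj
        have hz : ((M + D) ^ k) i m = 0 := ih i m (fun m' hm' => h m' (hm'.trans (Nat.le_succ k)))
        rw [hz, zero_mul]
      · have hMD : (M + D) m j = M m j := by
          simp [Matrix.add_apply, hD m j hmj]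
        by_cases hAmj : A m j = 0
        · rw [hMD, (hpat m j).mpr hAmj, mul_zero]
        · have hz : ((M + D) ^ k) i m = 0 := by
            apply ih
            intro m' hm'
            by_contra hne
            have hpos : 0 < (A ^ m') i m :=
              lt_of_le_of_ne (auxA_nonneg A hA01 m' i m) (Ne.symm hne)
            have hA1 : A m j = 1 := (hA01 m j).resolve_left hAmj
            have hle := auxA_step A hA01 m' i m j
            rw [hA1, mul_one] at hle
            have : (A ^ (m' + 1)) i j = 0 := h (m' + 1) (Nat.succ_le_succ hm')
            rw [this] at hle
            exact absurd (lt_of_lt_of_le hpos hle) (lt_irrefl 0)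
          rw [hz, zero_mul]

lemma auxL_pos (hA01 : ∀ i j, A i j = 0 ∨ A i j = 1)
    (hM0 : ∀ i j, 0 ≤ M i j)
    (hpat : ∀ i j, (M i j = 0 ↔ A i j = 0))
    (hD : ∀ i j, i ≠ j → D i j = 0)
    (hAdiag : ∀ i, A i i = 0) :
    ∀ k (i j : Fin n), (A ^ k) i j ≠ 0 → (∀ m < k, (A ^ m) i j = 0) →
      0 < ((M + D) ^ k) i j := by
  intro k
  induction k with
  | zero =>
      intro i j hne _
      simp only [pow_zero, Matrix.one_apply] at hne ⊢
      by_cases hij : i = j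
      · rw [if_pos hij]; norm_num
      · rw [if_neg hij] at hne; exact absurd rfl hne
  | succ k ih =>
      intro i j hne hmin
      rw [pow_succ, Matrix.mul_apply]
      -- find witness m with (A^k) i m ≠ 0 and A m j = 1
      have hex : ∃ m : Fin n, (A ^ k) i m ≠ 0 ∧ A m j = 1 := by
        by_contra hno
        push_neg at hno
        apply hne
        rw [pow_succ, Matrix.mul_apply]
        apply Finset.sum_eq_zero
        intro m _
        by_cases h1 : (A ^ k) i m = 0
        · rw [h1, zero_mul]
        · have := hno m h1
          have h2 : A m j = 0 := (hA01 m j).resolve_right this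
          rw [h2, mul_zero]
      obtain ⟨w, hw1, hw2⟩ := hex
      -- minimality transfers: ∀ m' < k, (A^m') i x = 0 whenever A x j = 1
      have key : ∀ x : Fin n, A x j ≠ 0 → ∀ m' < k, (A ^ m') i x = 0 := by
        intro x hAx m' hm'
        by_contra hne2
        have hpos : 0 < (A ^ m') i x :=
          lt_of_le_of_ne (auxA_nonneg A hA01 m' i x) (Ne.symm hne2)
        have hA1 : A x j = 1 := (hA01 x j).resolve_left hAx
        have hle := auxA_step A hA01 m' i x j
        rw [hA1, mul_one] at hle
        have hz : (A ^ (m' + 1)) i j = 0 := hmin (m' + 1) (Nat.succ_lt_succ hm')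
        rw [hz] at hle
        exact absurd (lt_of_lt_of_le hpos hle) (lt_irrefl 0)
      -- every term nonneg
      apply Finset.sum_pos' _ ⟨w, Finset.mem_univ w, ?_⟩
      · intro m _
        by_cases hmj : m = j
        · subst hmj
          have hz : ((M + D) ^ k) i m = 0 := by
            apply auxL_zero A M D hA01 hpat hD
            intro m' hm'
            exact hmin m' (Nat.lt_succ_of_le hm')
          rw [hz, zero_mul]
        · have hMD : (M + D) m j = M m j := by simp [Matrix.add_apply, hD m j hmj]
          rw [hMD]
          by_cases hAmj : A m j = 0
          · rw [(hpat m j).mpr hAmj, mul_zero]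
          · by_cases hk : (A ^ k) i m = 0
            · have hz : ((M + D) ^ k) i m = 0 := by
                apply auxL_zero A M D hA01 hpat hD
                intro m' hm'
                rcases Nat.lt_or_ge m' k with h' | h'
                · exact key m hAmj m' h'
                · have : m' = k := le_antisymm hm' h'
                  rw [this]; exact hk
              rw [hz, zero_mul]
            · have hpos := ih i m hk (key m hAmj)
              have hMpos : 0 < M m j :=
                lt_of_le_of_ne (hM0 m j) (Ne.symm (fun h => hAmj ((hpat m j).mp h)))
              positivity
      · -- the witness term is positive
        have hwj : w ≠ j := by
          intro hwj; rw [hwj, hAdiag j] at hw2; norm_num at hw2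
        have hMD : (M + D) w j = M w j := by simp [Matrix.add_apply, hD w j hwj]
        rw [hMD]
        have hpos := ih i w hw1 (key w (by rw [hw2]; norm_num) )
        have hMpos : 0 < M w j := by
          apply lt_of_le_of_ne (hM0 w j)
          intro h
          have := (hpat w j).mp h.symm
          rw [hw2] at this; norm_num at this
        positivity

end comb

lemma auxL_bound {n : ℕ} (L : Matrix (Fin n) (Fin n) ℝ) :
    ∀ (k : ℕ) (i j : Fin n), |(L ^ k) i j| ≤ (1 + ∑ p, ∑ q, |L p q|) ^ k := by
  have hC0 : (0:ℝ) ≤ ∑ p, ∑ q, |L p q| :=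
    Finset.sum_nonneg fun p _ => Finset.sum_nonneg fun q _ => abs_nonneg _
  set C : ℝ := 1 + ∑ p, ∑ q, |L p q| with hCdef
  have hC1 : (1:ℝ) ≤ C := le_add_of_nonneg_right hC0
  have hcol : ∀ j : Fin n, (∑ m, |L m j|) ≤ C := by
    intro j
    calc (∑ m, |L m j|) ≤ ∑ p, ∑ q, |L p q| := by
          apply Finset.sum_le_sum
          intro p _
          exact Finset.single_le_sum (f := fun q => |L p q|)
            (fun q _ => abs_nonneg _) (Finset.mem_univ j)
      _ ≤ C := le_add_of_nonneg_left zero_le_one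
  intro k
  induction k with
  | zero =>
      intro i j
      rw [pow_zero, pow_zero, Matrix.one_apply]
      split <;> simp
  | succ k ih =>
      intro i j
      rw [pow_succ, Matrix.mul_apply]
      calc |∑ m, (L ^ k) i m * L m j| ≤ ∑ m, |(L ^ k) i m * L m j| :=
            Finset.abs_sum_le_sum_abs _ _
        _ ≤ ∑ m, C ^ k * |L m j| := by
            apply Finset.sum_le_sum
            intro m _
            rw [abs_mul]
            exact mul_le_mul_of_nonneg_right (ih i m) (abs_nonneg _)
        _ = C ^ k * ∑ m, |L m j| := by rw [Finset.mul_sum]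
        _ ≤ C ^ k * C := by
            apply mul_le_mul_of_nonneg_left (hcol j) (pow_nonneg (by linarith) k)
        _ = C ^ (k + 1) := by rw [pow_succ]


/-- General Varadhan formula for graphs: with `A` the adjacency matrix
of a connected simple graph, `M ≥ 0` with the same zero pattern as `A`, `D` diagonal,
`L = M + D`, and `f(t) = Σ_k α_k t^k` real analytic near `0` with all `α_k ≠ 0`, for all
vertices `i, j`:
`lim_{t→0⁺} log |f(Lt)_{ij}| / log t = d(i,j)`,
where `f(Lt)_{ij} = Σ_k α_k t^k (L^k)_{ij}` and `d` is the shortest-path distance. -/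
theorem stmt_19 {n : ℕ} (A M D : Matrix (Fin n) (Fin n) ℝ)
    (hA01 : ∀ i j, A i j = 0 ∨ A i j = 1)
    (hAsym : ∀ i j, A i j = A j i)
    (hAdiag : ∀ i, A i i = 0)
    (hconn : ∀ i j : Fin n, ∃ m : ℕ, (A ^ m) i j ≠ 0)
    (hM0 : ∀ i j, 0 ≤ M i j)
    (hpat : ∀ i j, (M i j = 0 ↔ A i j = 0))
    (hD : ∀ i j, i ≠ j → D i j = 0)
    (α : ℕ → ℝ) (hα : ∀ k, α k ≠ 0)
    (r : ℝ) (hr : 0 < r)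
    (hconv : ∀ t : ℝ, |t| < r → Summable fun k : ℕ => |α k| * |t| ^ k)
    (d : Fin n → Fin n → ℕ)
    (hd : ∀ i j, d i j = sInf {m : ℕ | (A ^ m) i j ≠ 0}) :
    ∀ i j : Fin n,
      Filter.Tendsto
        (fun t : ℝ =>
          Real.log |∑' k : ℕ, α k * t ^ k * ((M + D) ^ k) i j| / Real.log t)
        (nhdsWithin 0 (Set.Ioi 0)) (nhds ((d i j : ℝ))) := by
  intro i j
  set L : Matrix (Fin n) (Fin n) ℝ := M + D with hL
  set D0 : ℕ := d i j with hD0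
  -- distance facts
  have hdmem : (A ^ D0) i j ≠ 0 := by
    rw [hD0, hd]; exact Nat.sInf_mem (hconn i j)
  have hdmin : ∀ m < D0, (A ^ m) i j = 0 := by
    intro m hm
    rw [hD0, hd] at hm
    have := Nat.notMem_of_lt_sInf hm
    simpa using this
  have hc : 0 < (L ^ D0) i j := auxL_pos A M D hA01 hM0 hpat hD hAdiag D0 i j hdmem hdmin
  have hzero : ∀ k < D0, (L ^ k) i j = 0 := fun k hk =>
    auxL_zero A M D hA01 hpat hD k i j (fun m hm => hdmin m (lt_of_le_of_lt hm hk))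
  -- bound constant
  set C : ℝ := 1 + ∑ p, ∑ q, |L p q| with hCdef
  have hC1 : (1:ℝ) ≤ C := le_add_of_nonneg_right
    (Finset.sum_nonneg fun p _ => Finset.sum_nonneg fun q _ => abs_nonneg _)
  have hC0 : (0:ℝ) < C := lt_of_lt_of_le one_pos hC1
  have hbnd : ∀ (k : ℕ) (p q : Fin n), |(L ^ k) p q| ≤ C ^ k := fun k p q => auxL_bound L k p q
  -- choose t0
  set t0 : ℝ := r / (2 * C) with ht0def
  have ht0 : 0 < t0 := div_pos hr (by linarith)
  have ht0C : t0 * C < r := by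
    rw [ht0def, div_mul_eq_mul_div]
    rw [div_lt_iff₀ (by linarith)]
    nlinarith
  -- summability of the base comparison series
  have hbase : ∀ t : ℝ, 0 < t → t ≤ t0 → Summable (fun k : ℕ => |α k| * (t * C) ^ k) := by
    intro t ht ht'
    have h1 : |t * C| < r := by
      rw [abs_of_nonneg (by positivity)]
      calc t * C ≤ t0 * C := by nlinarith
        _ < r := ht0C
    have := hconv (t * C) h1
    simpa [abs_of_nonneg (show (0:ℝ) ≤ t * C by positivity)] using this
  -- summability of shifted comparison series
  have hshift : ∀ (s : ℕ) (t : ℝ), 0 < t → t ≤ t0 →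
      Summable (fun k : ℕ => |α (k + s)| * (t * C) ^ k) := by
    intro s t ht ht'
    have h0 := (summable_nat_add_iff s).mpr (hbase t ht ht')
    have hne : (t * C) ^ s ≠ 0 := by positivity
    have h1 : Summable (fun k : ℕ => (t * C) ^ s * (|α (k + s)| * (t * C) ^ k)) := by
      apply h0.congr
      intro k
      rw [pow_add]
      ring
    exact (summable_mul_left_iff hne).mp h1
  have htCnn : ∀ t : ℝ, 0 < t → (0:ℝ) ≤ t * C := fun t ht => by positivity
  -- summability of the main series
  have hsummain : ∀ t : ℝ, 0 < t → t ≤ t0 →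
      Summable (fun k : ℕ => α k * t ^ k * (L ^ k) i j) := by
    intro t ht ht'
    apply Summable.of_abs
    apply Summable.of_nonneg_of_le (fun k => abs_nonneg _) _ (hbase t ht ht')
    intro k
    rw [abs_mul, abs_mul, abs_pow, abs_of_nonneg ht.le, mul_pow]
    calc |α k| * t ^ k * |(L ^ k) i j| ≤ |α k| * t ^ k * C ^ k := by
          apply mul_le_mul_of_nonneg_left (hbnd k i j) (by positivity)
      _ = |α k| * (t ^ k * C ^ k) := by ring
  -- summability of the shifted main series
  have hsumshift : ∀ (s : ℕ) (t : ℝ), 0 < t → t ≤ t0 →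
      Summable (fun k : ℕ => α (k + s) * t ^ k * (L ^ (k + s)) i j) := by
    intro s t ht ht'
    apply Summable.of_abs
    apply Summable.of_nonneg_of_le (fun k => abs_nonneg _)
      _ (((hshift s t ht ht').mul_left (C ^ s)))
    intro k
    rw [abs_mul, abs_mul, abs_pow, abs_of_nonneg ht.le]
    calc |α (k + s)| * t ^ k * |(L ^ (k + s)) i j| ≤ |α (k + s)| * t ^ k * C ^ (k + s) := by
          apply mul_le_mul_of_nonneg_left (hbnd (k + s) i j) (by positivity)
      _ = C ^ s * (|α (k + s)| * (t * C) ^ k) := by rw [pow_add, mul_pow]; ring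
  -- the function G
  set G : ℝ → ℝ := fun t => ∑' k : ℕ, α (k + D0) * t ^ k * (L ^ (k + D0)) i j with hGdef
  set a : ℝ := α D0 * (L ^ D0) i j with hadef
  have ha : a ≠ 0 := mul_ne_zero (hα D0) (ne_of_gt hc)
  -- factorization
  have hfact : ∀ t : ℝ, 0 < t → t ≤ t0 →
      (∑' k : ℕ, α k * t ^ k * (L ^ k) i j) = t ^ D0 * G t := by
    intro t ht ht'
    rw [← Summable.sum_add_tsum_nat_add D0 (hsummain t ht ht')]
    have h1 : (∑ k ∈ Finset.range D0, α k * t ^ k * (L ^ k) i j) = 0 :=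
      Finset.sum_eq_zero fun k hk => by
        rw [hzero k (Finset.mem_range.mp hk), mul_zero]
    rw [h1, zero_add, hGdef, ← tsum_mul_left]
    apply tsum_congr
    intro k
    rw [pow_add]
    ring
  -- constant for the continuity bound
  set K : ℝ := C ^ (D0 + 1) * ∑' k : ℕ, |α (k + (D0 + 1))| * (t0 * C) ^ k with hKdef
  -- |G t - a| ≤ t * K on (0, t0]
  have hGbnd : ∀ t : ℝ, 0 < t → t ≤ t0 → |G t - a| ≤ t * K := by
    intro t ht ht'
    have hs := hsumshift D0 t ht ht'
    have hs1 : Summable (fun k : ℕ => α (k + 1 + D0) * t ^ (k + 1) * (L ^ (k + 1 + D0)) i j) := by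
      have := hsumshift (D0 + 1) t ht ht'
      have h2 := this.mul_left t
      apply h2.congr
      intro k
      have he : k + (D0 + 1) = k + 1 + D0 := by omega
      rw [he, pow_succ]
      ring
    have hGt : G t - a = ∑' k : ℕ, α (k + 1 + D0) * t ^ (k + 1) * (L ^ (k + 1 + D0)) i j := by
      have h := tsum_eq_zero_add' (f := fun k : ℕ => α (k + D0) * t ^ k * (L ^ (k + D0)) i j) hs1
      have h0 : G t = ∑' (k : ℕ), α (k + D0) * t ^ k * (L ^ (k + D0)) i j := rfl
      rw [h0, h, hadef]
      simp only [zero_add, pow_zero, mul_one]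
      ring
    rw [hGt]
    have hmaj : Summable (fun k : ℕ => t * C ^ (D0 + 1) * (|α (k + (D0 + 1))| * (t0 * C) ^ k)) :=
      ((hshift (D0 + 1) t0 ht0 le_rfl).mul_left _)
    calc |∑' k : ℕ, α (k + 1 + D0) * t ^ (k + 1) * (L ^ (k + 1 + D0)) i j|
        ≤ ∑' k : ℕ, |α (k + 1 + D0) * t ^ (k + 1) * (L ^ (k + 1 + D0)) i j| := by
          have := norm_tsum_le_tsum_norm (f := fun k : ℕ =>
            α (k + 1 + D0) * t ^ (k + 1) * (L ^ (k + 1 + D0)) i j) ?_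
          · simpa only [Real.norm_eq_abs] using this
          · simpa only [Real.norm_eq_abs] using hs1.abs
      _ ≤ ∑' k : ℕ, t * C ^ (D0 + 1) * (|α (k + (D0 + 1))| * (t0 * C) ^ k) := by
          apply Summable.tsum_le_tsum _ hs1.abs hmaj
          intro k
          rw [abs_mul, abs_mul, abs_pow, abs_of_nonneg ht.le]
          have he : k + 1 + D0 = k + (D0 + 1) := by omega
          rw [he]
          calc |α (k + (D0 + 1))| * t ^ (k + 1) * |(L ^ (k + (D0 + 1))) i j|
              ≤ |α (k + (D0 + 1))| * t ^ (k + 1) * C ^ (k + (D0 + 1)) := by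
                apply mul_le_mul_of_nonneg_left (hbnd _ i j) (by positivity)
            _ = t * C ^ (D0 + 1) * (|α (k + (D0 + 1))| * (t * C) ^ k) := by
                rw [pow_add, pow_succ, mul_pow]; ring
            _ ≤ t * C ^ (D0 + 1) * (|α (k + (D0 + 1))| * (t0 * C) ^ k) := by
                apply mul_le_mul_of_nonneg_left _ (by positivity)
                apply mul_le_mul_of_nonneg_left _ (abs_nonneg _)
                apply pow_le_pow_left₀ (by positivity)
                nlinarith
      _ = t * K := by
          rw [tsum_mul_left, hKdef]
          ring
  -- G tends to a
  have hK0 : 0 ≤ K := by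
    rw [hKdef]
    apply mul_nonneg (by positivity)
    apply tsum_nonneg
    intro k
    positivity
  have hGtend : Filter.Tendsto G (nhdsWithin 0 (Set.Ioi 0)) (nhds a) := by
    rw [tendsto_iff_norm_sub_tendsto_zero]
    apply squeeze_zero' (g := fun t => t * K)
    · exact Filter.Eventually.of_forall fun t => norm_nonneg _
    · filter_upwards [Ioo_mem_nhdsGT ht0] with t htm
      rw [Real.norm_eq_abs]
      exact hGbnd t htm.1 htm.2.le
    · have : Filter.Tendsto (fun t : ℝ => t * K) (nhds 0) (nhds (0 * K)) :=
        (continuous_id.mul continuous_const).tendsto 0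
      rw [zero_mul] at this
      exact this.mono_left nhdsWithin_le_nhds
  have hGne : ∀ᶠ t in nhdsWithin 0 (Set.Ioi 0), G t ≠ 0 := hGtend.eventually_ne ha
  -- the target function eventually equals D0 + log |G t| * (log t)⁻¹
  have hmem : Set.Ioo (0:ℝ) (min t0 1) ∈ nhdsWithin (0:ℝ) (Set.Ioi 0) :=
    Ioo_mem_nhdsGT (lt_min ht0 one_pos)
  have heq : ∀ᶠ t in nhdsWithin (0:ℝ) (Set.Ioi 0),
      Real.log |∑' k : ℕ, α k * t ^ k * (L ^ k) i j| / Real.log t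
        = (D0 : ℝ) + Real.log |G t| * (Real.log t)⁻¹ := by
    filter_upwards [hmem, hGne] with t htm hGt
    obtain ⟨ht, htlt⟩ := htm
    have ht0' : t ≤ t0 := le_of_lt (lt_of_lt_of_le htlt (min_le_left _ _))
    have ht1 : t < 1 := lt_of_lt_of_le htlt (min_le_right _ _)
    have hlogt : Real.log t < 0 := Real.log_neg ht ht1
    have hlogne : Real.log t ≠ 0 := ne_of_lt hlogt
    rw [hfact t ht ht0', abs_mul, abs_of_nonneg (by positivity : (0:ℝ) ≤ t ^ D0)]
    rw [Real.log_mul (by positivity) (abs_ne_zero.mpr hGt), Real.log_pow]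
    field_simp
  rw [Filter.tendsto_congr' heq]
  -- compute the limit of the RHS
  have h1 : Filter.Tendsto (fun t : ℝ => Real.log |G t|) (nhdsWithin 0 (Set.Ioi 0))
      (nhds (Real.log |a|)) := by
    apply Filter.Tendsto.comp (Real.continuousAt_log (abs_ne_zero.mpr ha)).tendsto
    exact (continuous_abs.tendsto a).comp hGtend
  have h2 : Filter.Tendsto (fun t : ℝ => (Real.log t)⁻¹) (nhdsWithin 0 (Set.Ioi 0)) (nhds 0) := by
    have hlog : Filter.Tendsto Real.log (nhdsWithin 0 (Set.Ioi 0)) Filter.atBot :=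
      Real.tendsto_log_nhdsGT_zero
    have hneg : Filter.Tendsto (fun t : ℝ => -Real.log t) (nhdsWithin 0 (Set.Ioi 0))
        Filter.atTop := Filter.tendsto_neg_atBot_atTop.comp hlog
    have := hneg.inv_tendsto_atTop
    have h3 : Filter.Tendsto (fun t : ℝ => -(-Real.log t)⁻¹) (nhdsWithin 0 (Set.Ioi 0))
        (nhds (-0)) := this.neg
    rw [neg_zero] at h3
    apply h3.congr
    intro t
    simp [inv_neg]
  have := (tendsto_const_nhds (x := (D0:ℝ))).add (h1.mul h2)
  rw [mul_zero, add_zero] at this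
  exact this
end
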